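/- arXiv:2205.09271 — 4 statements merged into one kernel-verified Lean document; each statement's English description precedes it below -/
import Mathlib

section
/- Let k₁₋, k₁₊, k₂₋, k₂₊, ν be positive real numbers and let G₀, G₁, G₂ : ℝ → ℝ be three times differentiable functions satisfying, for all real z: (i) k₁₋G₁(z) − k₁₊G₀(z) + (1−z)G₀′(z) = 0; (ii) k₁₊G₀(z) − k₁₋G₁(z) − k₂₊G₁(z) + k₂₋G₂(z) + (1−z)G₁′(z) = 0; (iii) k₂₊G₁(z) − k₂₋G₂(z) + (1−z)G₂′(z) − ν(1−z)G₂(z) = 0. Then G₂ satisfies the third-order linear ODE (z−1)²G₂'''(z) + (z−1)(3+κ₁−ν(z−1))G₂''(z) + [κ₃ + (1+k₁₋+k₁₊)k₂₋ − ν(z−1)(3+κ₂)]G₂′(z) − νκ₃G₂(z) = 0 for all real z, where κ₁ = k₁₋+k₁₊+k₂₋+k₂₊, κ₂ = κ₁ − k₂₋, and κ₃ = k₁₋+(1+k₁₊)(1+k₂₊). -/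
/-!
Adding the three balance equations gives `(1 - z) (G₀' + G₁' + G₂' - ν G₂) = 0`, so by
continuity `G₀' + G₁' + G₂' = ν G₂` on all of `ℝ`, the point `z = 1` included. Differentiate
equation (i) once, and eliminate `G₀'`, `G₀''` with this sum identity and its derivative; after
multiplying by `k₂₊`, the terms `k₂₊ G₁'` and `k₂₊ G₁''` are eliminated with the first two
derivatives of equation (iii), which leaves a linear equation in `G₂` and its derivatives only.
-/

theorem HasDerivAt.eq_zero_of_forall_eq_zero {𝕜 F : Type*} [NontriviallyNormedField 𝕜]
    [NormedAddCommGroup F] [NormedSpace 𝕜 F] {f : 𝕜 → F} {f' : F} {x : 𝕜}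
    (h : HasDerivAt f f' x) (hf : ∀ y, f y = 0) : f' = 0 :=
  h.unique ((funext hf : f = fun _ => 0) ▸ hasDerivAt_const x 0)

theorem eq_zero_of_forall_sub_smul_eq_zero {𝕜 E : Type*} [NontriviallyNormedField 𝕜]
    [NormedAddCommGroup E] [NormedSpace 𝕜 E] {f : 𝕜 → E} {a : 𝕜} (hf : Continuous f)
    (h : ∀ z, (a - z) • f z = 0) (z : 𝕜) : f z = 0 := by
  have hne : ∀ y ∈ ({a}ᶜ : Set 𝕜), f y = 0 := fun y hy =>
    (smul_eq_zero.mp (h y)).resolve_left (sub_ne_zero.mpr (Ne.symm hy))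
  exact congrFun (Continuous.ext_on (dense_compl_singleton a) hf continuous_const hne) z

theorem hasDerivAt_one_sub_mul {g : ℝ → ℝ} {g' z : ℝ} (hg : HasDerivAt g g' z) :
    HasDerivAt (fun y => (1 - y) * g y) ((1 - z) * g' - g z) z :=
  (((hasDerivAt_id' z).const_sub 1).mul hg).congr_deriv (by ring)

namespace ThreeStateGene

variable {k₁m k₁p k₂m k₂p ν : ℝ} {G₀ G₁ G₂ : ℝ → ℝ}

theorem sum_deriv_eq (hG₀' : Continuous (deriv G₀)) (hG₁' : Continuous (deriv G₁))
    (hG₂ : Continuous G₂) (hG₂' : Continuous (deriv G₂))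
    (heq₀ : ∀ z : ℝ, k₁m * G₁ z - k₁p * G₀ z + (1 - z) * deriv G₀ z = 0)
    (heq₁ : ∀ z : ℝ, k₁p * G₀ z - k₁m * G₁ z - k₂p * G₁ z + k₂m * G₂ z
      + (1 - z) * deriv G₁ z = 0)
    (heq₂ : ∀ z : ℝ, k₂p * G₁ z - k₂m * G₂ z + (1 - z) * deriv G₂ z
      - ν * (1 - z) * G₂ z = 0) (z : ℝ) :
    deriv G₀ z + deriv G₁ z + deriv G₂ z = ν * G₂ z := by
  have hsum : ∀ z : ℝ, (1 - z) • (deriv G₀ z + deriv G₁ z + deriv G₂ z - ν * G₂ z) = 0 :=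
    fun z => by rw [smul_eq_mul]; linear_combination heq₀ z + heq₁ z + heq₂ z
  have hcont : Continuous fun z => deriv G₀ z + deriv G₁ z + deriv G₂ z - ν * G₂ z := by
    fun_prop
  exact sub_eq_zero.mp (eq_zero_of_forall_sub_smul_eq_zero hcont hsum z)

theorem sum_deriv2_eq (hG₀' : Differentiable ℝ (deriv G₀))
    (hG₁' : Differentiable ℝ (deriv G₁)) (hG₂ : Differentiable ℝ G₂)
    (hG₂' : Differentiable ℝ (deriv G₂))
    (hsum : ∀ z, deriv G₀ z + deriv G₁ z + deriv G₂ z = ν * G₂ z) (z : ℝ) :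
    deriv (deriv G₀) z + deriv (deriv G₁) z + deriv (deriv G₂) z = ν * deriv G₂ z := by
  have h := ((((hG₀' z).hasDerivAt.add (hG₁' z).hasDerivAt).add (hG₂' z).hasDerivAt).sub
    ((hG₂ z).hasDerivAt.const_mul ν)).eq_zero_of_forall_eq_zero (fun y => sub_eq_zero.mpr (hsum y))
  linear_combination h

theorem balance₀_deriv (hG₀ : Differentiable ℝ G₀) (hG₀' : Differentiable ℝ (deriv G₀))
    (hG₁ : Differentiable ℝ G₁)
    (heq₀ : ∀ z : ℝ, k₁m * G₁ z - k₁p * G₀ z + (1 - z) * deriv G₀ z = 0) (z : ℝ) :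
    k₁m * deriv G₁ z - (k₁p + 1) * deriv G₀ z + (1 - z) * deriv (deriv G₀) z = 0 := by
  have h := ((((hG₁ z).hasDerivAt.const_mul k₁m).sub ((hG₀ z).hasDerivAt.const_mul k₁p)).add
    (hasDerivAt_one_sub_mul (hG₀' z).hasDerivAt)).eq_zero_of_forall_eq_zero heq₀
  linear_combination h

theorem balance₂_deriv (hG₁ : Differentiable ℝ G₁) (hG₂ : Differentiable ℝ G₂)
    (hG₂' : Differentiable ℝ (deriv G₂))
    (heq₂ : ∀ z : ℝ, k₂p * G₁ z - k₂m * G₂ z + (1 - z) * deriv G₂ z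
      - ν * (1 - z) * G₂ z = 0) (z : ℝ) :
    k₂p * deriv G₁ z - (k₂m + 1) * deriv G₂ z + (1 - z) * deriv (deriv G₂) z
      + ν * G₂ z - ν * (1 - z) * deriv G₂ z = 0 := by
  have h := (((((hG₁ z).hasDerivAt.const_mul k₂p).sub ((hG₂ z).hasDerivAt.const_mul k₂m)).add
    (hasDerivAt_one_sub_mul (hG₂' z).hasDerivAt)).sub
    ((hasDerivAt_one_sub_mul (hG₂ z).hasDerivAt).const_mul ν)).eq_zero_of_forall_eq_zero
    (fun y => by simp only [Pi.add_apply, Pi.sub_apply]; linear_combination heq₂ y)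
  linear_combination h

theorem balance₂_deriv2 (hG₁' : Differentiable ℝ (deriv G₁)) (hG₂ : Differentiable ℝ G₂)
    (hG₂' : Differentiable ℝ (deriv G₂)) (hG₂'' : Differentiable ℝ (deriv (deriv G₂)))
    (hbal : ∀ z, k₂p * deriv G₁ z - (k₂m + 1) * deriv G₂ z + (1 - z) * deriv (deriv G₂) z
      + ν * G₂ z - ν * (1 - z) * deriv G₂ z = 0) (z : ℝ) :
    k₂p * deriv (deriv G₁) z - (k₂m + 2) * deriv (deriv G₂) z
      + (1 - z) * deriv (deriv (deriv G₂)) z + 2 * ν * deriv G₂ z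
      - ν * (1 - z) * deriv (deriv G₂) z = 0 := by
  have h := ((((((hG₁' z).hasDerivAt.const_mul k₂p).sub
    ((hG₂' z).hasDerivAt.const_mul (k₂m + 1))).add
    (hasDerivAt_one_sub_mul (hG₂'' z).hasDerivAt)).add ((hG₂ z).hasDerivAt.const_mul ν)).sub
    ((hasDerivAt_one_sub_mul (hG₂' z).hasDerivAt).const_mul ν)).eq_zero_of_forall_eq_zero
    (fun y => by simp only [Pi.add_apply, Pi.sub_apply]; linear_combination hbal y)
  linear_combination h

end ThreeStateGene

open ThreeStateGene in
theorem G2_third_order_ODE_general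
    (k₁m k₁p k₂m k₂p ν : ℝ)
    (κ₁ κ₂ κ₃ : ℝ)
    (hκ₁ : κ₁ = k₁m + k₁p + k₂m + k₂p)
    (hκ₂ : κ₂ = κ₁ - k₂m)
    (hκ₃ : κ₃ = k₁m + (1 + k₁p) * (1 + k₂p))
    (G₀ G₁ G₂ : ℝ → ℝ)
    (hG₀ : Differentiable ℝ G₀) (hG₀' : Differentiable ℝ (deriv G₀))
    (hG₁ : Differentiable ℝ G₁) (hG₁' : Differentiable ℝ (deriv G₁))
    (hG₂ : Differentiable ℝ G₂) (hG₂' : Differentiable ℝ (deriv G₂))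
    (hG₂'' : Differentiable ℝ (deriv (deriv G₂)))
    (heq₀ : ∀ z : ℝ, k₁m * G₁ z - k₁p * G₀ z + (1 - z) * deriv G₀ z = 0)
    (heq₁ : ∀ z : ℝ, k₁p * G₀ z - k₁m * G₁ z - k₂p * G₁ z + k₂m * G₂ z
      + (1 - z) * deriv G₁ z = 0)
    (heq₂ : ∀ z : ℝ, k₂p * G₁ z - k₂m * G₂ z + (1 - z) * deriv G₂ z
      - ν * (1 - z) * G₂ z = 0) :
    ∀ z : ℝ,
      (z - 1) ^ 2 * deriv (deriv (deriv G₂)) z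
        + (z - 1) * (3 + κ₁ - ν * (z - 1)) * deriv (deriv G₂) z
        + (κ₃ + (1 + k₁m + k₁p) * k₂m - ν * (z - 1) * (3 + κ₂)) * deriv G₂ z
        - ν * κ₃ * G₂ z = 0 := by
  have hsum := sum_deriv_eq hG₀'.continuous hG₁'.continuous hG₂.continuous hG₂'.continuous
    heq₀ heq₁ heq₂
  have hsum' := sum_deriv2_eq hG₀' hG₁' hG₂ hG₂' hsum
  have hbal₀ := balance₀_deriv hG₀ hG₀' hG₁ heq₀
  have hbal₂ := balance₂_deriv hG₁ hG₂ hG₂' heq₂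
  have hbal₂' := balance₂_deriv2 hG₁' hG₂ hG₂' hG₂'' hbal₂
  intro z
  subst hκ₁ hκ₂ hκ₃
  linear_combination k₂p * hbal₀ z - (k₁m + k₁p + 1) * hbal₂ z + (1 - z) * hbal₂' z
    + k₂p * (k₁p + 1) * hsum z - k₂p * (1 - z) * hsum' z

/-- If three times differentiable G₀, G₁, G₂ satisfy the steady-state
generating-function system of the three-state gene model, then G₂ satisfies the
third-order linear ODE
(z−1)²G₂''' + (z−1)(3+κ₁−ν(z−1))G₂'' + [κ₃+(1+k₁₋+k₁₊)k₂₋−ν(z−1)(3+κ₂)]G₂′ − νκ₃G₂ = 0. -/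
theorem G2_third_order_ODE
    (k₁m k₁p k₂m k₂p ν : ℝ) (hk₁m : 0 < k₁m) (hk₁p : 0 < k₁p)
    (hk₂m : 0 < k₂m) (hk₂p : 0 < k₂p) (hν : 0 < ν)
    (κ₁ κ₂ κ₃ : ℝ)
    (hκ₁ : κ₁ = k₁m + k₁p + k₂m + k₂p)
    (hκ₂ : κ₂ = κ₁ - k₂m)
    (hκ₃ : κ₃ = k₁m + (1 + k₁p) * (1 + k₂p))
    (G₀ G₁ G₂ : ℝ → ℝ)
    (hG₀ : Differentiable ℝ G₀) (hG₀' : Differentiable ℝ (deriv G₀))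
    (hG₀'' : Differentiable ℝ (deriv (deriv G₀)))
    (hG₁ : Differentiable ℝ G₁) (hG₁' : Differentiable ℝ (deriv G₁))
    (hG₁'' : Differentiable ℝ (deriv (deriv G₁)))
    (hG₂ : Differentiable ℝ G₂) (hG₂' : Differentiable ℝ (deriv G₂))
    (hG₂'' : Differentiable ℝ (deriv (deriv G₂)))
    (heq₀ : ∀ z : ℝ, k₁m * G₁ z - k₁p * G₀ z + (1 - z) * deriv G₀ z = 0)
    (heq₁ : ∀ z : ℝ, k₁p * G₀ z - k₁m * G₁ z - k₂p * G₁ z + k₂m * G₂ z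
      + (1 - z) * deriv G₁ z = 0)
    (heq₂ : ∀ z : ℝ, k₂p * G₁ z - k₂m * G₂ z + (1 - z) * deriv G₂ z
      - ν * (1 - z) * G₂ z = 0) :
    ∀ z : ℝ,
      (z - 1) ^ 2 * deriv (deriv (deriv G₂)) z
        + (z - 1) * (3 + κ₁ - ν * (z - 1)) * deriv (deriv G₂) z
        + (κ₃ + (1 + k₁m + k₁p) * k₂m - ν * (z - 1) * (3 + κ₂)) * deriv G₂ z
        - ν * κ₃ * G₂ z = 0 :=
  G2_third_order_ODE_general k₁m k₁p k₂m k₂p ν κ₁ κ₂ κ₃ hκ₁ hκ₂ hκ₃ G₀ G₁ G₂ hG₀ hG₀' hG₁ hG₁' hG₂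
    hG₂' hG₂'' heq₀ heq₁ heq₂
end

section
/- Let k₁₋, k₁₊, k₂₋, k₂₊, ν be positive real numbers, define κ₀, κ₁, κ₂, κ₃ and K₁±, K₂± as above, and let c be any real number. Then the function G₂(z) = c · ₂F₂({1+K₂₋, 1+K₂₊},{1+K₁₋, 1+K₁₊}, ν(z−1)) satisfies, for all real z, (z−1)²G₂'''(z) + (z−1)(3+κ₁−ν(z−1))G₂''(z) + [κ₃ + (1+k₁₋+k₁₊)k₂₋ − ν(z−1)(3+κ₂)]G₂′(z) − νκ₃G₂(z) = 0. -/
/-- The Pochhammer symbol (a)ₖ = a(a+1)⋯(a+k−1) for a real parameter. -/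
noncomputable def poch (a : ℝ) (k : ℕ) : ℝ := (ascPochhammer ℝ k).eval a

/-- The generalized hypergeometric function ₂F₂({a₁,a₂},{b₁,b₂},x). -/
noncomputable def F22 (a₁ a₂ b₁ b₂ x : ℝ) : ℝ :=
  ∑' k : ℕ, (poch a₁ k * poch a₂ k) / (poch b₁ k * poch b₂ k) * x ^ k / (Nat.factorial k)

namespace G2Aux

open Filter Finset

lemma poch_succ (a : ℝ) (k : ℕ) : poch a (k + 1) = poch a k * (a + k) :=
  ascPochhammer_succ_eval k a

lemma poch_pos {a : ℝ} (ha : 0 < a) : ∀ k, 0 < poch a k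
  | 0 => by simp [poch]
  | (k + 1) => by
      rw [poch_succ]
      exact mul_pos (poch_pos ha k) (by positivity)

/-- Taylor coefficients of ₂F₂. -/
noncomputable def sC (a₁ a₂ b₁ b₂ : ℝ) (k : ℕ) : ℝ :=
  poch a₁ k * poch a₂ k / (poch b₁ k * poch b₂ k * (k.factorial : ℝ))

/-- Coefficients of the derivative series. -/
noncomputable def dC (b : ℕ → ℝ) (k : ℕ) : ℝ := ((k : ℝ) + 1) * b (k + 1)

/-- A coefficient sequence with everywhere-summable weighted absolute series. -/
def Good (b : ℕ → ℝ) : Prop := ∀ r : ℝ, 0 < r → Summable fun k => |b k| * r ^ k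

lemma Good.summable {b : ℕ → ℝ} (hb : Good b) (x : ℝ) :
    Summable fun k => b k * x ^ k := by
  refine Summable.of_norm_bounded (hb (|x| + 1) (by positivity)) fun k => ?_
  rw [Real.norm_eq_abs, abs_mul, abs_pow]
  exact mul_le_mul_of_nonneg_left
    (pow_le_pow_left₀ (abs_nonneg x) (by linarith) k) (abs_nonneg _)

lemma dC_apply (b : ℕ → ℝ) (k : ℕ) : dC b k = ((k : ℝ) + 1) * b (k + 1) := rfl

lemma Good.dGood {b : ℕ → ℝ} (hb : Good b) : Good (G2Aux.dC b) := by
  intro r hr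
  have h2 : Summable fun k => |b (k + 1)| * (2 * r) ^ (k + 1) := by
    exact (summable_nat_add_iff (f := fun k => |b k| * (2 * r) ^ k) 1).2
      (hb (2 * r) (by linarith))
  have h3 : Summable fun k => |b (k + 1)| * (2 * r) ^ k := by
    have h := h2.mul_left ((2 * r)⁻¹)
    refine h.congr fun k => ?_
    have h2r : (2 * r) ≠ 0 := by positivity
    rw [pow_succ]
    field_simp
  refine Summable.of_nonneg_of_le (fun k => by positivity) (fun k => ?_) h3
  show |((k : ℝ) + 1) * b (k + 1)| * r ^ k ≤ |b (k + 1)| * (2 * r) ^ k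
  rw [abs_mul]
  have hk : |((k : ℝ) + 1)| = (k : ℝ) + 1 := abs_of_pos (by positivity)
  have h2p : ((k : ℝ) + 1) ≤ 2 ^ k := by
    exact_mod_cast Nat.succ_le_of_lt (Nat.lt_two_pow_self (n := k))
  calc |((k : ℝ) + 1)| * |b (k + 1)| * r ^ k
      ≤ 2 ^ k * |b (k + 1)| * r ^ k := by
        rw [hk]
        exact mul_le_mul_of_nonneg_right
          (mul_le_mul_of_nonneg_right h2p (abs_nonneg _)) (by positivity)
    _ = |b (k + 1)| * (2 * r) ^ k := by rw [mul_pow]; ring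

lemma Good.hasDerivAt {b : ℕ → ℝ} (hb : Good b) (x : ℝ) :
    HasDerivAt (fun y : ℝ => ∑' k, b k * y ^ k) (∑' k, dC b k * x ^ k) x := by
  set R : ℝ := |x| + 1 with hR
  have hR1 : (1 : ℝ) ≤ R := by rw [hR]; linarith [abs_nonneg x]
  have hR0 : (0 : ℝ) < R := by linarith
  have hu : Summable fun k => |b k| * (2 * R) ^ k := hb (2 * R) (by linarith)
  have hmem : x ∈ Metric.ball (0 : ℝ) R := by
    simp only [Metric.mem_ball, Real.dist_eq, sub_zero]
    rw [hR]; linarith [abs_nonneg x]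
  have hbound : ∀ (n : ℕ) (y : ℝ), |y| ≤ R →
      ‖b n * ((n : ℝ) * y ^ (n - 1))‖ ≤ |b n| * (2 * R) ^ n := by
    intro n y hy
    have h1 : |y| ^ (n - 1) ≤ R ^ (n - 1) := pow_le_pow_left₀ (abs_nonneg y) hy _
    have h2 : R ^ (n - 1) ≤ R ^ n := pow_le_pow_right₀ hR1 (Nat.sub_le n 1)
    have h3 : (n : ℝ) ≤ 2 ^ n := by exact_mod_cast (Nat.lt_two_pow_self (n := n)).le
    rw [Real.norm_eq_abs, abs_mul, abs_mul, abs_pow, Nat.abs_cast]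
    have h4 : (n : ℝ) * |y| ^ (n - 1) ≤ 2 ^ n * R ^ n :=
      mul_le_mul h3 (h1.trans h2) (by positivity) (by positivity)
    calc |b n| * ((n : ℝ) * |y| ^ (n - 1)) ≤ |b n| * (2 ^ n * R ^ n) :=
          mul_le_mul_of_nonneg_left h4 (abs_nonneg _)
      _ = |b n| * (2 * R) ^ n := by rw [mul_pow]
  have key : HasDerivAt (fun y : ℝ => ∑' k, b k * y ^ k)
      (∑' n, b n * ((n : ℝ) * x ^ (n - 1))) x := by
    refine hasDerivAt_tsum_of_isPreconnected
      (g' := fun n y => b n * ((n : ℝ) * y ^ (n - 1))) hu Metric.isOpen_ball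
      (convex_ball (0:ℝ) R).isPreconnected
      (fun n y _ => (hasDerivAt_pow n y).const_mul (b n)) ?_ hmem (hb.summable x) hmem
    intro n y hy
    have hyR : |y| ≤ R := by
      simp only [Metric.mem_ball, Real.dist_eq, sub_zero] at hy
      exact le_of_lt hy
    exact hbound n y hyR
  have hsum : Summable fun n => b n * ((n : ℝ) * x ^ (n - 1)) := by
    refine Summable.of_norm_bounded hu fun n => hbound n x (by rw [hR]; linarith)
  have heq : ∑' n, b n * ((n : ℝ) * x ^ (n - 1)) = ∑' k, dC b k * x ^ k := by
    rw [hsum.tsum_eq_zero_add]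
    simp only [Nat.cast_zero, zero_mul, mul_zero, zero_add]
    refine tsum_congr fun n => ?_
    show b (n + 1) * (((n : ℕ) + 1 : ℕ) * x ^ (n + 1 - 1)) = ((n : ℝ) + 1) * b (n + 1) * x ^ n
    push_cast
    ring
  exact heq ▸ key

lemma sC_rec (a₁ a₂ b₁ b₂ : ℝ) (ha₁ : 0 < a₁) (ha₂ : 0 < a₂) (hb₁ : 0 < b₁) (hb₂ : 0 < b₂)
    (j : ℕ) :
    ((j : ℝ) + 1) * (b₁ + j) * (b₂ + j) * sC a₁ a₂ b₁ b₂ (j + 1)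
      = (a₁ + j) * (a₂ + j) * sC a₁ a₂ b₁ b₂ j := by
  unfold sC
  rw [poch_succ, poch_succ, poch_succ, poch_succ, Nat.factorial_succ]
  have h1 : poch b₁ j ≠ 0 := (poch_pos hb₁ j).ne'
  have h2 : poch b₂ j ≠ 0 := (poch_pos hb₂ j).ne'
  have h3 : ((j.factorial : ℝ)) ≠ 0 := by positivity
  have h4 : b₁ + (j : ℝ) ≠ 0 := by positivity
  have h5 : b₂ + (j : ℝ) ≠ 0 := by positivity
  have h6 : ((j : ℝ) + 1) ≠ 0 := by positivity
  push_cast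
  field_simp

lemma sC_pos {a₁ a₂ b₁ b₂ : ℝ} (ha₁ : 0 < a₁) (ha₂ : 0 < a₂) (hb₁ : 0 < b₁) (hb₂ : 0 < b₂)
    (k : ℕ) : 0 < sC a₁ a₂ b₁ b₂ k := by
  unfold sC
  have := poch_pos ha₁ k
  have := poch_pos ha₂ k
  have := poch_pos hb₁ k
  have := poch_pos hb₂ k
  have : (0:ℝ) < k.factorial := by positivity
  positivity

lemma sC_good (a₁ a₂ b₁ b₂ : ℝ) (ha₁ : 0 < a₁) (ha₂ : 0 < a₂) (hb₁ : 0 < b₁) (hb₂ : 0 < b₂) :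
    Good (sC a₁ a₂ b₁ b₂) := by
  intro r hr
  obtain ⟨N, hN⟩ := exists_nat_ge (a₁ + a₂ + 8 * r + 8)
  refine summable_of_ratio_norm_eventually_le (r := 1/2) (by norm_num) ?_
  filter_upwards [eventually_ge_atTop N] with k hk
  have hkN : (N : ℝ) ≤ k := Nat.cast_le.2 hk
  have hk0 : (0 : ℝ) ≤ k := Nat.cast_nonneg k
  have hka₁ : a₁ ≤ (k : ℝ) := by linarith
  have hka₂ : a₂ ≤ (k : ℝ) := by linarith
  have hkr : 8 * r ≤ (k : ℝ) + 1 := by linarith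
  set A := sC a₁ a₂ b₁ b₂ with hA
  have hApos : ∀ m, 0 < A m := sC_pos ha₁ ha₂ hb₁ hb₂
  have hrec := sC_rec a₁ a₂ b₁ b₂ ha₁ ha₂ hb₁ hb₂ k
  rw [← hA] at hrec
  have hq1 : (a₁ + (k:ℝ)) * (a₂ + k) ≤ (2 * k) * (2 * k) :=
    mul_le_mul (by linarith) (by linarith) (by linarith) (by positivity)
  have hq2 : ((k:ℝ)) * k ≤ (b₁ + k) * (b₂ + k) := by
    nlinarith [mul_pos hb₁ hb₂, mul_nonneg hb₁.le hk0, mul_nonneg hb₂.le hk0]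
  have hmain : (a₁ + (k:ℝ)) * (a₂ + k) * r ≤ (1/2) * (((k:ℝ) + 1) * (b₁ + k) * (b₂ + k)) := by
    have t1 := mul_le_mul_of_nonneg_right hq1 hr.le
    have t2 : (0:ℝ) ≤ ((k:ℝ) + 1) * ((b₁ + (k:ℝ)) * (b₂ + k) - (k:ℝ) * k) :=
      mul_nonneg (by linarith) (by linarith)
    have t3 : (0:ℝ) ≤ ((k:ℝ) * k) * ((k:ℝ) + 1 - 8 * r) :=
      mul_nonneg (mul_nonneg hk0 hk0) (by linarith)
    nlinarith [t1, t2, t3]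
  have hArk : (0:ℝ) ≤ A k * r ^ k := mul_nonneg (hApos k).le (by positivity)
  have hfin : A (k+1) * r ^ (k+1) ≤ 1/2 * (A k * r ^ k) := by
    have hDpos : (0:ℝ) < ((k:ℝ) + 1) * (b₁ + k) * (b₂ + k) := by positivity
    refine le_of_mul_le_mul_left ?_ hDpos
    calc (((k:ℝ) + 1) * (b₁ + k) * (b₂ + k)) * (A (k+1) * r ^ (k+1))
        = ((a₁ + (k:ℝ)) * (a₂ + k) * r) * (A k * r ^ k) := by
          linear_combination (r ^ (k+1)) * hrec
      _ ≤ ((1/2) * (((k:ℝ) + 1) * (b₁ + k) * (b₂ + k))) * (A k * r ^ k) :=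
          mul_le_mul_of_nonneg_right hmain hArk
      _ = (((k:ℝ) + 1) * (b₁ + k) * (b₂ + k)) * (1/2 * (A k * r ^ k)) := by ring
  have eA1 : |A (k+1)| = A (k+1) := abs_of_pos (hApos _)
  have eA0 : |A k| = A k := abs_of_pos (hApos _)
  rw [eA1, eA0, Real.norm_eq_abs, Real.norm_eq_abs,
    abs_of_pos (mul_pos (hApos _) (pow_pos hr _)),
    abs_of_pos (mul_pos (hApos _) (pow_pos hr _))]
  exact hfin

/-- zero-padding by one -/
def padOne (g : ℕ → ℝ) : ℕ → ℝ
  | 0 => 0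
  | (k + 1) => g k

/-- zero-padding by two -/
def padTwo (g : ℕ → ℝ) : ℕ → ℝ
  | 0 => 0
  | 1 => 0
  | (k + 2) => g k

lemma hasSum_shift1 {g : ℕ → ℝ} {x S : ℝ} (h : HasSum (fun k => g k * x ^ k) S) :
    HasSum (padOne fun k => g k * x ^ (k + 1)) (x * S) := by
  have e : (fun j => x * (g j * x ^ j)) = (fun j => (padOne fun k => g k * x ^ (k + 1)) (j + 1)) := by
    funext j
    show x * (g j * x ^ j) = g j * x ^ (j + 1)
    ring
  have h2 := (hasSum_nat_add_iff (f := padOne fun k => g k * x ^ (k + 1)) 1).1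
    (e ▸ h.mul_left x)
  simpa [padOne] using h2

lemma hasSum_shift2 {g : ℕ → ℝ} {x S : ℝ} (h : HasSum (fun k => g k * x ^ k) S) :
    HasSum (padTwo fun k => g k * x ^ (k + 2)) (x ^ 2 * S) := by
  have e : (fun j => x ^ 2 * (g j * x ^ j))
      = (fun j => (padTwo fun k => g k * x ^ (k + 2)) (j + 2)) := by
    funext j
    show x ^ 2 * (g j * x ^ j) = g j * x ^ (j + 2)
    ring
  have h2 := (hasSum_nat_add_iff (f := padTwo fun k => g k * x ^ (k + 2)) 2).1
    (e ▸ h.mul_left (x ^ 2))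
  simpa [padTwo, Finset.sum_range_succ] using h2

lemma key_identity (a₁ a₂ b₁ b₂ : ℝ) (ha₁ : 0 < a₁) (ha₂ : 0 < a₂)
    (hb₁ : 0 < b₁) (hb₂ : 0 < b₂) (x : ℝ) :
    x ^ 2 * (∑' k, dC (dC (dC (sC a₁ a₂ b₁ b₂))) k * x ^ k)
      - x ^ 2 * (∑' k, dC (dC (sC a₁ a₂ b₁ b₂)) k * x ^ k)
      + (1 + b₁ + b₂) * (x * (∑' k, dC (dC (sC a₁ a₂ b₁ b₂)) k * x ^ k))
      - (1 + a₁ + a₂) * (x * (∑' k, dC (sC a₁ a₂ b₁ b₂) k * x ^ k))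
      + b₁ * b₂ * (∑' k, dC (sC a₁ a₂ b₁ b₂) k * x ^ k)
      - a₁ * a₂ * (∑' k, sC a₁ a₂ b₁ b₂ k * x ^ k) = 0 := by
  set S := sC a₁ a₂ b₁ b₂ with hS
  have hg0 : Good S := sC_good a₁ a₂ b₁ b₂ ha₁ ha₂ hb₁ hb₂
  have hg1 : Good (dC S) := hg0.dGood
  have hg2 : Good (dC (dC S)) := hg1.dGood
  have hg3 : Good (dC (dC (dC S))) := hg2.dGood
  have h0 : HasSum (fun k => S k * x ^ k) (∑' k, S k * x ^ k) := (hg0.summable x).hasSum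
  have h1 : HasSum (fun k => dC S k * x ^ k) (∑' k, dC S k * x ^ k) := (hg1.summable x).hasSum
  have h2 : HasSum (fun k => dC (dC S) k * x ^ k) (∑' k, dC (dC S) k * x ^ k) :=
    (hg2.summable x).hasSum
  have h3 : HasSum (fun k => dC (dC (dC S)) k * x ^ k) (∑' k, dC (dC (dC S)) k * x ^ k) :=
    (hg3.summable x).hasSum
  have hT1 := hasSum_shift2 h3
  have hT2 := hasSum_shift2 h2
  have hT3 := hasSum_shift1 h2
  have hT4 := hasSum_shift1 h1
  have hBig : HasSum (fun k =>
      padTwo (fun j => dC (dC (dC S)) j * x ^ (j + 2)) k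
      - padTwo (fun j => dC (dC S) j * x ^ (j + 2)) k
      + (1 + b₁ + b₂) * padOne (fun j => dC (dC S) j * x ^ (j + 1)) k
      - (1 + a₁ + a₂) * padOne (fun j => dC S j * x ^ (j + 1)) k
      + b₁ * b₂ * (dC S k * x ^ k)
      - a₁ * a₂ * (S k * x ^ k))
      (x ^ 2 * (∑' k, dC (dC (dC S)) k * x ^ k)
        - x ^ 2 * (∑' k, dC (dC S) k * x ^ k)
        + (1 + b₁ + b₂) * (x * (∑' k, dC (dC S) k * x ^ k))
        - (1 + a₁ + a₂) * (x * (∑' k, dC S k * x ^ k))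
        + b₁ * b₂ * (∑' k, dC S k * x ^ k)
        - a₁ * a₂ * (∑' k, S k * x ^ k)) := by
    exact ((((hT1.sub hT2).add (hT3.mul_left _)).sub (hT4.mul_left _)).add
      (h1.mul_left _)).sub (h0.mul_left _)
  have hrec : ∀ j : ℕ, ((j : ℝ) + 1) * (b₁ + j) * (b₂ + j) * S (j + 1)
      = (a₁ + j) * (a₂ + j) * S j := sC_rec a₁ a₂ b₁ b₂ ha₁ ha₂ hb₁ hb₂
  have j0 : dC S 0 = S 1 := by rw [dC_apply]; norm_num
  have j1 : dC S 1 = 2 * S 2 := by rw [dC_apply]; norm_num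
  have j20 : dC (dC S) 0 = 2 * S 2 := by rw [dC_apply]; norm_num [j1]
  have i1' : ∀ n : ℕ, dC S (n + 1) = ((n : ℝ) + 2) * S (n + 2) := by
    intro n
    rw [dC_apply, show n + 1 + 1 = n + 2 from rfl]
    push_cast
    ring
  have i1'' : ∀ n : ℕ, dC S (n + 2) = ((n : ℝ) + 3) * S (n + 3) := by
    intro n
    rw [dC_apply, show n + 2 + 1 = n + 3 from rfl]
    push_cast
    ring
  have i2 : ∀ n : ℕ, dC (dC S) n = ((n : ℝ) + 1) * (((n : ℝ) + 2) * S (n + 2)) := by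
    intro n
    rw [dC_apply, i1' n]
  have i2' : ∀ n : ℕ, dC (dC S) (n + 1)
      = ((n : ℝ) + 2) * (((n : ℝ) + 3) * S (n + 3)) := by
    intro n
    rw [dC_apply, show n + 1 + 1 = n + 2 from rfl, i1'' n]
    push_cast
    ring
  have i3 : ∀ n : ℕ, dC (dC (dC S)) n
      = ((n : ℝ) + 1) * (((n : ℝ) + 2) * (((n : ℝ) + 3) * S (n + 3))) := by
    intro n
    rw [dC_apply, i2' n]
  have hz : (fun k : ℕ =>
      padTwo (fun j => dC (dC (dC S)) j * x ^ (j + 2)) k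
      - padTwo (fun j => dC (dC S) j * x ^ (j + 2)) k
      + (1 + b₁ + b₂) * padOne (fun j => dC (dC S) j * x ^ (j + 1)) k
      - (1 + a₁ + a₂) * padOne (fun j => dC S j * x ^ (j + 1)) k
      + b₁ * b₂ * (dC S k * x ^ k)
      - a₁ * a₂ * (S k * x ^ k)) = (fun _ => (0 : ℝ)) := by
    funext k
    rcases k with (_ | _ | j)
    · show (0 : ℝ) - 0 + (1 + b₁ + b₂) * 0 - (1 + a₁ + a₂) * 0
          + b₁ * b₂ * (dC S 0 * x ^ 0) - a₁ * a₂ * (S 0 * x ^ 0) = 0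
      have h := hrec 0
      norm_num at h
      rw [j0]
      linear_combination h
    · show (0 : ℝ) - 0 + (1 + b₁ + b₂) * (dC (dC S) 0 * x ^ 1)
          - (1 + a₁ + a₂) * (dC S 0 * x ^ 1)
          + b₁ * b₂ * (dC S 1 * x ^ 1) - a₁ * a₂ * (S 1 * x ^ 1) = 0
      have h := hrec 1
      norm_num at h
      rw [j20, j0, j1]
      linear_combination x * h
    · show dC (dC (dC S)) j * x ^ (j + 2) - dC (dC S) j * x ^ (j + 2)
          + (1 + b₁ + b₂) * (dC (dC S) (j + 1) * x ^ (j + 2))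
          - (1 + a₁ + a₂) * (dC S (j + 1) * x ^ (j + 2))
          + b₁ * b₂ * (dC S (j + 2) * x ^ (j + 2))
          - a₁ * a₂ * (S (j + 2) * x ^ (j + 2)) = 0
      have h := hrec (j + 2)
      rw [show j + 2 + 1 = j + 3 from rfl] at h
      push_cast at h
      rw [i3 j, i2 j, i2' j, i1' j, i1'' j]
      linear_combination x ^ (j + 2) * h
  have hV := (hz ▸ hBig).unique hasSum_zero
  linear_combination hV

lemma deriv_step {b : ℕ → ℝ} (hb : Good b) (C ν : ℝ) (z : ℝ) :
    HasDerivAt (fun z : ℝ => C * ∑' k, b k * (ν * (z - 1)) ^ k)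
      ((C * ν) * ∑' k, dC b k * (ν * (z - 1)) ^ k) z := by
  have hin : HasDerivAt (fun z : ℝ => ν * (z - 1)) ν z := by
    simpa using ((hasDerivAt_id z).sub_const 1).const_mul ν
  have h : HasDerivAt (fun z : ℝ => C * ∑' k, b k * (ν * (z - 1)) ^ k)
      (C * ((∑' k, dC b k * (ν * (z - 1)) ^ k) * ν)) z := by
    have := ((hb.hasDerivAt (ν * (z - 1))).comp z hin).const_mul C; exact this
  convert h using 1
  ring

lemma final_combine (κ₁ κ₂ κ₃ A a₁ a₂ b₁ b₂ c ν z F0 F1 F2 F3 : ℝ)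
    (hbs : b₁ + b₂ = 2 + κ₁) (hbp : b₁ * b₂ = κ₃ + A)
    (has : a₁ + a₂ = 2 + κ₂) (hap : a₁ * a₂ = κ₃)
    (hKI : (ν * (z - 1)) ^ 2 * F3 - (ν * (z - 1)) ^ 2 * F2
      + (1 + b₁ + b₂) * ((ν * (z - 1)) * F2)
      - (1 + a₁ + a₂) * ((ν * (z - 1)) * F1) + b₁ * b₂ * F1 - a₁ * a₂ * F0 = 0) :
    (z - 1) ^ 2 * (c * ν * ν * ν * F3) + (z - 1) * (3 + κ₁ - ν * (z - 1)) * (c * ν * ν * F2)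
      + (κ₃ + A - ν * (z - 1) * (3 + κ₂)) * (c * ν * F1) - ν * κ₃ * (c * F0) = 0 := by
  linear_combination (c * ν) * hKI - (c * ν * (ν * (z - 1)) * F2) * hbs
    + (c * ν * (ν * (z - 1)) * F1) * has - (c * ν * F1) * hbp + (c * ν * F0) * hap

end G2Aux

open G2Aux in
/-- G₂(z) = c · ₂F₂({1+K₂₋,1+K₂₊},{1+K₁₋,1+K₁₊}, ν(z−1)) satisfies the
third-order linear ODE of the three-state gene model. -/
theorem F22_solves_G2_ODE
    (k₁m k₁p k₂m k₂p ν : ℝ) (hk₁m : 0 < k₁m) (hk₁p : 0 < k₁p)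
    (hk₂m : 0 < k₂m) (hk₂p : 0 < k₂p) (hν : 0 < ν)
    (κ₀ κ₁ κ₂ κ₃ : ℝ)
    (hκ₀ : κ₀ = (k₁m + k₁p) * k₂m + k₁p * k₂p)
    (hκ₁ : κ₁ = k₁m + k₁p + k₂m + k₂p)
    (hκ₂ : κ₂ = κ₁ - k₂m)
    (hκ₃ : κ₃ = k₁m + (1 + k₁p) * (1 + k₂p))
    (K₁m K₁p K₂m K₂p : ℝ)
    (hK₁m : K₁m = (κ₁ - Real.sqrt (κ₁ ^ 2 - 4 * κ₀)) / 2)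
    (hK₁p : K₁p = (κ₁ + Real.sqrt (κ₁ ^ 2 - 4 * κ₀)) / 2)
    (hK₂m : K₂m = (κ₂ - Real.sqrt (κ₂ ^ 2 - 4 * (k₁p * k₂p))) / 2)
    (hK₂p : K₂p = (κ₂ + Real.sqrt (κ₂ ^ 2 - 4 * (k₁p * k₂p))) / 2)
    (c : ℝ) (G₂ : ℝ → ℝ)
    (hG₂ : ∀ z : ℝ, G₂ z = c * F22 (1 + K₂m) (1 + K₂p) (1 + K₁m) (1 + K₁p) (ν * (z - 1))) :
    ∀ z : ℝ,
      (z - 1) ^ 2 * deriv (deriv (deriv G₂)) z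
        + (z - 1) * (3 + κ₁ - ν * (z - 1)) * deriv (deriv G₂) z
        + (κ₃ + (1 + k₁m + k₁p) * k₂m - ν * (z - 1) * (3 + κ₂)) * deriv G₂ z
        - ν * κ₃ * G₂ z = 0 := by
  -- basic positivity
  have hκ₀pos : 0 < κ₀ := by rw [hκ₀]; positivity
  have hκ₁pos : 0 < κ₁ := by rw [hκ₁]; positivity
  have hκ₂pos : 0 < κ₂ := by rw [hκ₂, hκ₁]; linarith
  -- discriminants
  have hd1 : 0 ≤ κ₁ ^ 2 - 4 * κ₀ := by
    rw [hκ₀, hκ₁]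
    nlinarith [sq_nonneg (k₁m + k₁p - k₂m - k₂p), mul_pos hk₁m hk₂p]
  have hd2 : 0 ≤ κ₂ ^ 2 - 4 * (k₁p * k₂p) := by
    rw [hκ₂, hκ₁]
    nlinarith [sq_nonneg (k₁p - k₂p), mul_pos hk₁m hk₁p, mul_pos hk₁m hk₂p, sq_nonneg k₁m]
  have hs1 := Real.sq_sqrt hd1
  have hs2 := Real.sq_sqrt hd2
  have hs1n := Real.sqrt_nonneg (κ₁ ^ 2 - 4 * κ₀)
  have hs2n := Real.sqrt_nonneg (κ₂ ^ 2 - 4 * (k₁p * k₂p))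
  have hlt1 : Real.sqrt (κ₁ ^ 2 - 4 * κ₀) < κ₁ := by nlinarith [hs1, hs1n]
  have hP2pos : 0 < k₁p * k₂p := mul_pos hk₁p hk₂p
  have hlt2 : Real.sqrt (κ₂ ^ 2 - 4 * (k₁p * k₂p)) < κ₂ := by nlinarith [hs2, hs2n]
  -- positivity of parameters
  have hb₁ : 0 < 1 + K₁m := by rw [hK₁m]; linarith
  have hb₂ : 0 < 1 + K₁p := by rw [hK₁p]; linarith
  have ha₁ : 0 < 1 + K₂m := by rw [hK₂m]; linarith
  have ha₂ : 0 < 1 + K₂p := by rw [hK₂p]; linarith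
  -- sum and product identities
  have hbs : (1 + K₁m) + (1 + K₁p) = 2 + κ₁ := by rw [hK₁m, hK₁p]; ring
  have has : (1 + K₂m) + (1 + K₂p) = 2 + κ₂ := by rw [hK₂m, hK₂p]; ring
  have hbp : (1 + K₁m) * (1 + K₁p) = κ₃ + (1 + k₁m + k₁p) * k₂m := by
    rw [hK₁m, hK₁p]
    have : κ₃ + (1 + k₁m + k₁p) * k₂m = 1 + κ₁ + κ₀ := by
      rw [hκ₃, hκ₁, hκ₀]; ring
    rw [this]
    linear_combination (-(1:ℝ)/4) * hs1
  have hap : (1 + K₂m) * (1 + K₂p) = κ₃ := by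
    rw [hK₂m, hK₂p]
    have : κ₃ = 1 + κ₂ + k₁p * k₂p := by rw [hκ₃, hκ₂, hκ₁]; ring
    rw [this]
    linear_combination (-(1:ℝ)/4) * hs2
  -- the series
  have hGood : Good (sC (1 + K₂m) (1 + K₂p) (1 + K₁m) (1 + K₁p)) :=
    sC_good _ _ _ _ ha₁ ha₂ hb₁ hb₂
  have hf22 : ∀ y : ℝ, F22 (1 + K₂m) (1 + K₂p) (1 + K₁m) (1 + K₁p) y
      = ∑' k, sC (1 + K₂m) (1 + K₂p) (1 + K₁m) (1 + K₁p) k * y ^ k := by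
    intro y
    unfold F22 sC
    exact tsum_congr fun k => by ring
  have hGfun : G₂ = fun z => c * ∑' k,
      sC (1 + K₂m) (1 + K₂p) (1 + K₁m) (1 + K₁p) k * (ν * (z - 1)) ^ k := by
    funext z; rw [hG₂ z, hf22]
  have d1 : deriv G₂ = fun z => (c * ν) * ∑' k,
      dC (sC (1 + K₂m) (1 + K₂p) (1 + K₁m) (1 + K₁p)) k * (ν * (z - 1)) ^ k := by
    rw [hGfun]
    funext z
    exact (deriv_step hGood c ν z).deriv
  have d2 : deriv (deriv G₂) = fun z => (c * ν * ν) * ∑' k,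
      dC (dC (sC (1 + K₂m) (1 + K₂p) (1 + K₁m) (1 + K₁p))) k * (ν * (z - 1)) ^ k := by
    rw [d1]
    funext z
    exact (deriv_step hGood.dGood (c * ν) ν z).deriv
  have d3 : deriv (deriv (deriv G₂)) = fun z => (c * ν * ν * ν) * ∑' k,
      dC (dC (dC (sC (1 + K₂m) (1 + K₂p) (1 + K₁m) (1 + K₁p)))) k * (ν * (z - 1)) ^ k := by
    rw [d2]
    funext z
    exact (deriv_step hGood.dGood.dGood (c * ν * ν) ν z).deriv
  intro z
  have e0 : G₂ z = c * ∑' k,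
      sC (1 + K₂m) (1 + K₂p) (1 + K₁m) (1 + K₁p) k * (ν * (z - 1)) ^ k := by
    rw [hGfun]
  have e1 : deriv G₂ z = (c * ν) * ∑' k,
      dC (sC (1 + K₂m) (1 + K₂p) (1 + K₁m) (1 + K₁p)) k * (ν * (z - 1)) ^ k := by rw [d1]
  have e2 : deriv (deriv G₂) z = (c * ν * ν) * ∑' k,
      dC (dC (sC (1 + K₂m) (1 + K₂p) (1 + K₁m) (1 + K₁p))) k * (ν * (z - 1)) ^ k := by rw [d2]
  have e3 : deriv (deriv (deriv G₂)) z = (c * ν * ν * ν) * ∑' k,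
      dC (dC (dC (sC (1 + K₂m) (1 + K₂p) (1 + K₁m) (1 + K₁p)))) k * (ν * (z - 1)) ^ k := by
    rw [d3]
  rw [e0, e1, e2, e3]
  have hKI := key_identity (1 + K₂m) (1 + K₂p) (1 + K₁m) (1 + K₁p) ha₁ ha₂ hb₁ hb₂ (ν * (z - 1))
  exact final_combine κ₁ κ₂ κ₃ ((1 + k₁m + k₁p) * k₂m) _ _ _ _ c ν z _ _ _ _
    hbs hbp has hap (by linear_combination hKI)
end

section
/- Let k₁₋, k₁₊, k₂₋, k₂₊, ν be positive real numbers, define K₁±, K₂± as above, and set G(z) = ₂F₂({K₂₋,K₂₊},{K₁₋,K₁₊}, ν(z−1)). For each natural number n set pₙ = ((K₂₋)_n (K₂₊)_n)/((K₁₋)_n (K₁₊)_n) · (νⁿ/n!) · ₂F₂({K₂₋+n, K₂₊+n},{K₁₋+n, K₁₊+n}, −ν). Then for every real z the series Σ_{n=0}^∞ pₙ zⁿ converges and equals G(z); that is, pₙ is the n-th Taylor coefficient of G at z = 0. -/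
set_option maxHeartbeats 1000000 in
lemma poch_pos {a : ℝ} (ha : 0 < a) (k : ℕ) : 0 < poch a k :=
  ascPochhammer_pos k a ha

lemma poch_zero (a : ℝ) : poch a 0 = 1 := by simp [poch]

lemma poch_succ (a : ℝ) (k : ℕ) : poch a (k + 1) = poch a k * (a + k) :=
  ascPochhammer_succ_eval k a

lemma poch_add (a : ℝ) (n m : ℕ) : poch a (n + m) = poch a n * poch (a + n) m := by
  have h := congrArg (Polynomial.eval a) (ascPochhammer_mul (S := ℝ) n m)
  simpa [poch, Polynomial.eval_comp] using h.symm

set_option maxHeartbeats 1000000 in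
lemma key_hassum {A B C D ν : ℝ} (hA : 0 < A) (hB : 0 < B) (hC : 0 < C) (hD : 0 < D)
    (hν : 0 < ν) (hsum : A + B ≤ C + D) (hprod : A * B ≤ C * D) (z : ℝ) :
    HasSum (fun n : ℕ => poch A n * poch B n / (poch C n * poch D n)
      * (ν ^ n / (Nat.factorial n))
      * F22 (A + n) (B + n) (C + n) (D + n) (-ν) * z ^ n)
      (F22 A B C D (ν * (z - 1))) := by
  set c : ℕ → ℝ := fun k => poch A k * poch B k / (poch C k * poch D k) with hc
  set d : ℕ → ℕ → ℝ := fun n m =>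
    poch (A + n) m * poch (B + n) m / (poch (C + n) m * poch (D + n) m) with hd
  have hCD : ∀ k : ℕ, (0:ℝ) < poch C k * poch D k :=
    fun k => mul_pos (poch_pos hC k) (poch_pos hD k)
  have hcpos : ∀ k, 0 < c k := fun k =>
    div_pos (mul_pos (poch_pos hA k) (poch_pos hB k)) (hCD k)
  have hcle : ∀ k, c k ≤ 1 := by
    intro k
    induction k with
    | zero => simp [hc, poch_zero]
    | succ k ih =>
      have hstep : c (k + 1) = c k * ((A + k) * (B + k) / ((C + k) * (D + k))) := by
        simp only [hc, poch_succ]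
        field_simp
      have hq : (A + k) * (B + k) ≤ (C + k) * (D + k) := by
        have hk : (0:ℝ) ≤ (k : ℝ) := Nat.cast_nonneg k
        nlinarith
      have hqpos : (0:ℝ) < (C + k) * (D + k) := by positivity
      have : (A + k) * (B + k) / ((C + k) * (D + k)) ≤ 1 := by
        rw [div_le_one hqpos]; exact hq
      calc c (k + 1) = c k * ((A + k) * (B + k) / ((C + k) * (D + k))) := hstep
        _ ≤ c k * 1 := by
            apply mul_le_mul_of_nonneg_left this (le_of_lt (hcpos k))
        _ ≤ 1 := by rw [mul_one]; exact ih
  have hcsplit : ∀ n m, c (n + m) = c n * d n m := by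
    intro n m
    simp only [hc, hd, poch_add]
    have h1 := (poch_pos hA n).ne'
    have h2 := (poch_pos hB n).ne'
    have h3 := (poch_pos hC n).ne'
    have h4 := (poch_pos hD n).ne'
    have h5 := (poch_pos (by positivity : (0:ℝ) < C + n) m).ne'
    have h6 := (poch_pos (by positivity : (0:ℝ) < D + n) m).ne'
    field_simp
  have hdpos : ∀ n m, 0 < d n m := by
    intro n m
    exact div_pos (mul_pos (poch_pos (by positivity) m) (poch_pos (by positivity) m))
      (mul_pos (poch_pos (by positivity) m) (poch_pos (by positivity) m))
  -- the double-indexed family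
  set f : ℕ × ℕ → ℝ := fun q =>
    c q.1 * (ν ^ q.1 / (Nat.factorial q.1)) * z ^ q.1 * (d q.1 q.2 * (-ν) ^ q.2 / (Nat.factorial q.2))
    with hf
  have hfval : ∀ n m : ℕ, f (n, m)
      = c (n + m) * ν ^ n * ν ^ m * z ^ n * (-1) ^ m / (Nat.factorial n * Nat.factorial m) := by
    intro n m
    simp only [hf, hcsplit n m, neg_pow ν m]
    ring
  have hfabs : ∀ n m : ℕ, |f (n, m)|
      = c (n + m) * ((ν ^ n * |z| ^ n) * ν ^ m / (Nat.factorial n * Nat.factorial m)) := by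
    intro n m
    rw [hfval]
    rw [abs_div, abs_mul, abs_mul, abs_mul, abs_mul, abs_pow, abs_pow, abs_pow, abs_pow]
    rw [abs_of_pos (hcpos _), abs_of_pos hν, abs_neg, abs_one, one_pow]
    rw [abs_of_pos (by positivity : (0:ℝ) < (Nat.factorial n : ℝ) * Nat.factorial m)]
    ring
  have hg1 : Summable (fun n : ℕ => (ν * |z|) ^ n / (Nat.factorial n)) :=
    Real.summable_pow_div_factorial _
  have hg2 : Summable (fun m : ℕ => ν ^ m / (Nat.factorial m)) :=
    Real.summable_pow_div_factorial _
  have hgs : Summable (fun q : ℕ × ℕ =>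
      ((ν * |z|) ^ q.1 / (Nat.factorial q.1)) * (ν ^ q.2 / (Nat.factorial q.2))) :=
    hg1.mul_of_nonneg hg2 (fun n => by positivity) (fun m => by positivity)
  have hfs : Summable f := by
    apply Summable.of_norm
    apply hgs.of_nonneg_of_le (fun q => norm_nonneg _)
    rintro ⟨n, m⟩
    rw [Real.norm_eq_abs, hfabs n m]
    have hXnn : (0:ℝ) ≤ (ν ^ n * |z| ^ n) * ν ^ m / (Nat.factorial n * Nat.factorial m) := by
      positivity
    calc c (n + m) * ((ν ^ n * |z| ^ n) * ν ^ m / (Nat.factorial n * Nat.factorial m))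
        ≤ 1 * ((ν ^ n * |z| ^ n) * ν ^ m / (Nat.factorial n * Nat.factorial m)) :=
          mul_le_mul_of_nonneg_right (hcle _) hXnn
      _ = ((ν * |z|) ^ n / (Nat.factorial n)) * (ν ^ m / (Nat.factorial m)) := by
          rw [one_mul, mul_pow]; ring
  set S : ℝ := ∑' q, f q with hSdef
  have hS : HasSum f S := hfs.hasSum
  -- fiberwise sums give the coefficients
  have hfiber : ∀ n : ℕ, HasSum (fun m => f (n, m))
      (c n * (ν ^ n / (Nat.factorial n)) * F22 (A + n) (B + n) (C + n) (D + n) (-ν) * z ^ n) := by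
    intro n
    have hdsum : Summable (fun m => d n m * (-ν) ^ m / (Nat.factorial m)) := by
      apply Summable.of_norm
      apply (hg2.mul_left (c n)⁻¹).of_nonneg_of_le (fun m => norm_nonneg _)
      intro m
      rw [Real.norm_eq_abs, abs_div, abs_mul, abs_pow, abs_neg,
        abs_of_pos (hdpos n m), abs_of_pos hν,
        abs_of_pos (by positivity : (0:ℝ) < (Nat.factorial m : ℝ))]
      have hle : d n m ≤ (c n)⁻¹ := by
        rw [← one_div, le_div_iff₀ (hcpos n), mul_comm, ← hcsplit n m]
        exact hcle _
      have : (0:ℝ) ≤ ν ^ m / (Nat.factorial m) := by positivity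
      calc d n m * ν ^ m / (Nat.factorial m)
          = d n m * (ν ^ m / (Nat.factorial m)) := by ring
        _ ≤ (c n)⁻¹ * (ν ^ m / (Nat.factorial m)) :=
            mul_le_mul_of_nonneg_right hle this
    have hF : HasSum (fun m => d n m * (-ν) ^ m / (Nat.factorial m))
        (F22 (A + n) (B + n) (C + n) (D + n) (-ν)) := by
      have := hdsum.hasSum
      rwa [show (∑' m, d n m * (-ν) ^ m / (Nat.factorial m))
        = F22 (A + n) (B + n) (C + n) (D + n) (-ν) from rfl] at this
    rw [show c n * (ν ^ n / (Nat.factorial n)) * F22 (A + n) (B + n) (C + n) (D + n) (-ν) * z ^ n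
      = c n * (ν ^ n / (Nat.factorial n)) * z ^ n * F22 (A + n) (B + n) (C + n) (D + n) (-ν) from by ring]
    exact hF.mul_left _
  have hsum1 : HasSum (fun n : ℕ => c n * (ν ^ n / (Nat.factorial n))
      * F22 (A + n) (B + n) (C + n) (D + n) (-ν) * z ^ n) S :=
    hS.prod_fiberwise hfiber
  -- diagonal sums give F22 at ν(z-1)
  have hσ : HasSum (f ∘ (Finset.HasAntidiagonal.sigmaAntidiagonalEquivProd (A := ℕ))) S :=
    (Equiv.hasSum_iff _).2 hS
  have hdiag : HasSum (fun k : ℕ => c k * (ν * (z - 1)) ^ k / (Nat.factorial k)) S := by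
    apply HasSum.sigma hσ
    intro k
    have hfin : HasSum (fun x : (Finset.HasAntidiagonal.antidiagonal k : Finset (ℕ × ℕ)) =>
        (f ∘ (Finset.HasAntidiagonal.sigmaAntidiagonalEquivProd (A := ℕ))) ⟨k, x⟩)
        (∑ x : (Finset.HasAntidiagonal.antidiagonal k : Finset (ℕ × ℕ)),
          (f ∘ (Finset.HasAntidiagonal.sigmaAntidiagonalEquivProd (A := ℕ))) ⟨k, x⟩) := hasSum_fintype _
    convert hfin using 1
    have h1 : (∑ x : (Finset.HasAntidiagonal.antidiagonal k : Finset (ℕ × ℕ)),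
        (f ∘ (Finset.HasAntidiagonal.sigmaAntidiagonalEquivProd (A := ℕ))) ⟨k, x⟩)
        = ∑ ij ∈ Finset.HasAntidiagonal.antidiagonal k, f ij := by
      rw [← Finset.sum_coe_sort (Finset.HasAntidiagonal.antidiagonal k) f]
      rfl
    rw [h1, Finset.Nat.sum_antidiagonal_eq_sum_range_succ_mk]
    have h2 : ∀ i ∈ Finset.range (k + 1), f (i, k - i)
        = c k * ν ^ k / (Nat.factorial k) * (z ^ i * (-1) ^ (k - i) * (k.choose i)) := by
      intro i hi
      have hik : i ≤ k := Nat.lt_succ_iff.mp (Finset.mem_range.mp hi)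
      have hik' : i + (k - i) = k := Nat.add_sub_cancel' hik
      have := hfval i (k - i)
      rw [hik'] at this
      rw [this, Nat.cast_choose ℝ hik]
      have hν1 : ν ^ i * ν ^ (k - i) = ν ^ k := by rw [← pow_add, hik']
      have hfi : (0:ℝ) < Nat.factorial i := by positivity
      have hfki : (0:ℝ) < Nat.factorial (k - i) := by positivity
      have hfk : (0:ℝ) < Nat.factorial k := by positivity
      field_simp
      rw [← hν1]
      ring
    rw [Finset.sum_congr rfl h2, ← Finset.mul_sum]
    have hbin : (z - 1) ^ k = ∑ i ∈ Finset.range (k + 1),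
        z ^ i * (-1) ^ (k - i) * (k.choose i) := by
      have := add_pow z (-1) k
      simpa [← sub_eq_add_neg] using this
    rw [mul_pow, hbin]
    ring
  have hGz : F22 A B C D (ν * (z - 1)) = S := hdiag.tsum_eq ▸ rfl
  rw [hGz]
  exact hsum1

set_option maxHeartbeats 2000000 in
/-- The numbers pₙ given by (pn) of the paper are the Taylor coefficients of
G(z) = ₂F₂({K₂₋,K₂₊},{K₁₋,K₁₊}, ν(z−1)) at z = 0: for every real z, Σₙ pₙ zⁿ = G(z). -/
theorem taylor_coefficients_of_G
    (k₁m k₁p k₂m k₂p ν : ℝ) (hk₁m : 0 < k₁m) (hk₁p : 0 < k₁p)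
    (hk₂m : 0 < k₂m) (hk₂p : 0 < k₂p) (hν : 0 < ν)
    (κ₀ κ₁ κ₂ : ℝ)
    (hκ₀ : κ₀ = (k₁m + k₁p) * k₂m + k₁p * k₂p)
    (hκ₁ : κ₁ = k₁m + k₁p + k₂m + k₂p)
    (hκ₂ : κ₂ = κ₁ - k₂m)
    (K₁m K₁p K₂m K₂p : ℝ)
    (hK₁m : K₁m = (κ₁ - Real.sqrt (κ₁ ^ 2 - 4 * κ₀)) / 2)
    (hK₁p : K₁p = (κ₁ + Real.sqrt (κ₁ ^ 2 - 4 * κ₀)) / 2)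
    (hK₂m : K₂m = (κ₂ - Real.sqrt (κ₂ ^ 2 - 4 * (k₁p * k₂p))) / 2)
    (hK₂p : K₂p = (κ₂ + Real.sqrt (κ₂ ^ 2 - 4 * (k₁p * k₂p))) / 2)
    (G : ℝ → ℝ) (hG : ∀ z : ℝ, G z = F22 K₂m K₂p K₁m K₁p (ν * (z - 1)))
    (p : ℕ → ℝ)
    (hp : ∀ n : ℕ, p n = (poch K₂m n * poch K₂p n) / (poch K₁m n * poch K₁p n)
      * (ν ^ n / (Nat.factorial n))
      * F22 (K₂m + n) (K₂p + n) (K₁m + n) (K₁p + n) (-ν)) :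
    ∀ z : ℝ, HasSum (fun n : ℕ => p n * z ^ n) (G z) := by
  have hκ₀pos : 0 < κ₀ := by rw [hκ₀]; positivity
  have hκ₁pos : 0 < κ₁ := by rw [hκ₁]; positivity
  have hκ₂pos : 0 < κ₂ := by rw [hκ₂, hκ₁]; linarith
  have hD1 : κ₁ ^ 2 - 4 * κ₀ = (k₁m + k₁p - k₂m - k₂p) ^ 2 + 4 * (k₂p * k₁m) := by
    rw [hκ₁, hκ₀]; ring
  have hD2 : κ₂ ^ 2 - 4 * (k₁p * k₂p) = (k₁m + k₁p - k₂p) ^ 2 + 4 * (k₂p * k₁m) := by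
    rw [hκ₂, hκ₁]; ring
  have hD1nn : 0 ≤ κ₁ ^ 2 - 4 * κ₀ := by rw [hD1]; positivity
  have hD2nn : 0 ≤ κ₂ ^ 2 - 4 * (k₁p * k₂p) := by rw [hD2]; positivity
  have hs1sq : Real.sqrt (κ₁ ^ 2 - 4 * κ₀) ^ 2 = κ₁ ^ 2 - 4 * κ₀ := Real.sq_sqrt hD1nn
  have hs2sq : Real.sqrt (κ₂ ^ 2 - 4 * (k₁p * k₂p)) ^ 2 = κ₂ ^ 2 - 4 * (k₁p * k₂p) :=
    Real.sq_sqrt hD2nn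
  have hs1lt : Real.sqrt (κ₁ ^ 2 - 4 * κ₀) < κ₁ := by
    rw [Real.sqrt_lt' hκ₁pos]; linarith
  have hs2lt : Real.sqrt (κ₂ ^ 2 - 4 * (k₁p * k₂p)) < κ₂ := by
    rw [Real.sqrt_lt' hκ₂pos]; nlinarith [mul_pos hk₁p hk₂p]
  have hs1nn : 0 ≤ Real.sqrt (κ₁ ^ 2 - 4 * κ₀) := Real.sqrt_nonneg _
  have hs2nn : 0 ≤ Real.sqrt (κ₂ ^ 2 - 4 * (k₁p * k₂p)) := Real.sqrt_nonneg _
  have hK₁mpos : 0 < K₁m := by rw [hK₁m]; linarith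
  have hK₁ppos : 0 < K₁p := by rw [hK₁p]; linarith
  have hK₂mpos : 0 < K₂m := by rw [hK₂m]; linarith
  have hK₂ppos : 0 < K₂p := by rw [hK₂p]; linarith
  have hKsum : K₂m + K₂p ≤ K₁m + K₁p := by
    rw [hK₁m, hK₁p, hK₂m, hK₂p]
    have : (κ₂ - Real.sqrt (κ₂ ^ 2 - 4 * (k₁p * k₂p))) / 2
        + (κ₂ + Real.sqrt (κ₂ ^ 2 - 4 * (k₁p * k₂p))) / 2 = κ₂ := by ring
    rw [this, show (κ₁ - Real.sqrt (κ₁ ^ 2 - 4 * κ₀)) / 2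
        + (κ₁ + Real.sqrt (κ₁ ^ 2 - 4 * κ₀)) / 2 = κ₁ from by ring, hκ₂]
    linarith
  have hKprod : K₂m * K₂p ≤ K₁m * K₁p := by
    have h1 : K₁m * K₁p = κ₀ := by
      rw [hK₁m, hK₁p]
      nlinarith [hs1sq]
    have h2 : K₂m * K₂p = k₁p * k₂p := by
      rw [hK₂m, hK₂p]
      nlinarith [hs2sq]
    rw [h1, h2, hκ₀]
    nlinarith [mul_pos (by linarith : (0:ℝ) < k₁m + k₁p) hk₂m]
  intro z
  have key := key_hassum hK₂mpos hK₂ppos hK₁mpos hK₁ppos hν hKsum hKprod z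
  have hfe : (fun n : ℕ => p n * z ^ n)
      = fun n : ℕ => poch K₂m n * poch K₂p n / (poch K₁m n * poch K₁p n)
        * (ν ^ n / (Nat.factorial n))
        * F22 (K₂m + n) (K₂p + n) (K₁m + n) (K₁p + n) (-ν) * z ^ n := by
    funext n; rw [hp]
  rw [hfe, hG]
  exact key
end

section
/- Let k₁₋, k₁₊, k₂₋, k₂₊, ν be positive real numbers and let (p_{i,n})_{i∈{0,1,2}, n∈ℕ} be nonnegative reals with Σ_{i,n} (n+1)·p_{i,n} < ∞, satisfying for all n ∈ ℕ the steady-state balance equations (with p_{i,−1} := 0): 0 = −k₁₊p_{0,n} − n·p_{0,n} + (n+1)p_{0,n+1} + k₁₋p_{1,n}; 0 = −k₁₋p_{1,n} − n·p_{1,n} + (n+1)p_{1,n+1} + k₁₊p_{0,n} − k₂₊p_{1,n} + k₂₋p_{2,n}; 0 = −k₂₋p_{2,n} + k₂₊p_{1,n} − n·p_{2,n} + (n+1)p_{2,n+1} − νp_{2,n} + νp_{2,n−1}. Then the generating functions G_i(z) = Σ_{n=0}^∞ p_{i,n} zⁿ are well-defined and differentiable on the open interval (−1, 1), and on that interval they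 satisfy: k₁₋G₁(z) − k₁₊G₀(z) + (1−z)G₀′(z) = 0; k₁₊G₀(z) − k₁₋G₁(z) − k₂₊G₁(z) + k₂₋G₂(z) + (1−z)G₁′(z) = 0; and k₂₊G₁(z) − k₂₋G₂(z) + (1−z)G₂′(z) − ν(1−z)G₂(z) = 0. -/
/-!
Multiply the `n`-th balance equation by `zⁿ` and sum over `n`. Since `∑ (n+1) |p_{i,n}| < ∞`,
each series `Σₙ p_{i,n} zⁿ` may be differentiated termwise on `(-1, 1)`, and the terms of the
balance equations sum to `G_i` (from `p_{i,n}`), `G_i'` (from `(n+1) p_{i,n+1}`), `z G_i'`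
(from `n p_{i,n}`) and `z G_i` (from `p_{i,n-1}`).
-/

section PowerSeries

variable {a : ℕ → ℝ} {y z : ℝ}

lemma norm_mul_pow_le_succ_mul_abs (hy : |y| ≤ 1) (n : ℕ) :
    ‖a n * y ^ n‖ ≤ ((n : ℝ) + 1) * |a n| := by
  rw [Real.norm_eq_abs, abs_mul, abs_pow]
  have : |y| ^ n ≤ 1 := pow_le_one₀ (abs_nonneg y) hy
  nlinarith [abs_nonneg (a n), (n.cast_nonneg : (0 : ℝ) ≤ n)]

lemma norm_mul_natCast_mul_pow_pred_le_succ_mul_abs (hy : |y| ≤ 1) (n : ℕ) :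
    ‖a n * ((n : ℝ) * y ^ (n - 1))‖ ≤ ((n : ℝ) + 1) * |a n| := by
  rw [Real.norm_eq_abs, abs_mul, abs_mul, abs_pow, Nat.abs_cast]
  have : |y| ^ (n - 1) ≤ 1 := pow_le_one₀ (abs_nonneg y) hy
  nlinarith [abs_nonneg (a n), (n.cast_nonneg : (0 : ℝ) ≤ n),
    mul_nonneg (abs_nonneg (a n)) (n.cast_nonneg : (0 : ℝ) ≤ n)]

lemma summable_succ_mul_abs (ha : Summable fun n : ℕ => ((n : ℝ) + 1) * a n) :
    Summable fun n : ℕ => ((n : ℝ) + 1) * |a n| := by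
  refine ha.abs.congr fun n => ?_
  rw [abs_mul, abs_of_pos (Nat.cast_add_one_pos (α := ℝ) n)]

lemma summable_mul_pow (ha : Summable fun n : ℕ => ((n : ℝ) + 1) * a n) (hz : |z| ≤ 1) :
    Summable fun n : ℕ => a n * z ^ n :=
  (summable_succ_mul_abs ha).of_norm_bounded (norm_mul_pow_le_succ_mul_abs hz)

lemma summable_mul_natCast_mul_pow_pred (ha : Summable fun n : ℕ => ((n : ℝ) + 1) * a n)
    (hz : |z| ≤ 1) : Summable fun n : ℕ => a n * ((n : ℝ) * z ^ (n - 1)) :=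
  (summable_succ_mul_abs ha).of_norm_bounded (norm_mul_natCast_mul_pow_pred_le_succ_mul_abs hz)

lemma hasDerivAt_tsum_mul_pow (ha : Summable fun n : ℕ => ((n : ℝ) + 1) * a n) (hz : |z| < 1) :
    HasDerivAt (fun y => ∑' n : ℕ, a n * y ^ n) (∑' n : ℕ, a n * ((n : ℝ) * z ^ (n - 1))) z := by
  have mem_Ioo {y : ℝ} : y ∈ Set.Ioo (-1) 1 ↔ |y| < 1 := abs_lt.symm
  exact hasDerivAt_tsum_of_isPreconnected (summable_succ_mul_abs ha) isOpen_Ioo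
    isPreconnected_Ioo (fun n y _ => (hasDerivAt_pow n y).const_mul (a n))
    (fun n y hy => norm_mul_natCast_mul_pow_pred_le_succ_mul_abs (mem_Ioo.1 hy).le n)
    (mem_Ioo.2 (by norm_num : |(0 : ℝ)| < 1)) (summable_mul_pow ha (by norm_num)) (mem_Ioo.2 hz)

lemma hasSum_succ_mul_succ_mul_pow (ha : Summable fun n : ℕ => ((n : ℝ) + 1) * a n)
    (hz : |z| ≤ 1) :
    HasSum (fun n : ℕ => ((n : ℝ) + 1) * a (n + 1) * z ^ n)
      (∑' n : ℕ, a n * ((n : ℝ) * z ^ (n - 1))) := by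
  have h := (hasSum_nat_add_iff' 1).2 (summable_mul_natCast_mul_pow_pred ha hz).hasSum
  simp only [Finset.range_one, Finset.sum_singleton, CharP.cast_eq_zero, zero_mul, mul_zero,
    sub_zero, Nat.add_sub_cancel, Nat.cast_add_one] at h
  exact h.congr_fun fun n => by ring

lemma hasSum_natCast_mul_mul_pow (ha : Summable fun n : ℕ => ((n : ℝ) + 1) * a n)
    (hz : |z| ≤ 1) :
    HasSum (fun n : ℕ => (n : ℝ) * a n * z ^ n)
      (z * ∑' n : ℕ, a n * ((n : ℝ) * z ^ (n - 1))) := by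
  refine ((summable_mul_natCast_mul_pow_pred ha hz).hasSum.mul_left z).congr_fun fun n => ?_
  rcases n with _ | n
  · simp
  · rw [Nat.add_sub_cancel, pow_succ]
    ring

lemma HasSum.shift_mul_pow {s : ℝ} (h : HasSum (fun n : ℕ => a n * z ^ n) s) :
    HasSum (fun n : ℕ => (if n = 0 then 0 else a (n - 1)) * z ^ n) (z * s) := by
  refine (hasSum_nat_add_iff' 1).1 ?_
  simpa [pow_succ, mul_left_comm z, mul_comm z] using h.mul_left z

end PowerSeries

lemma HasSum.eq_zero_of_forall_eq_zero {ι α : Type*} [AddCommMonoid α] [TopologicalSpace α]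
    [T2Space α] {f : ι → α} {s : α} (h : HasSum f s)
    (hf : ∀ n, f n = 0) : s = 0 :=
  h.unique (by simpa only [funext hf] using hasSum_zero)

theorem balance_equations_to_generating_functions_general
    (k₁m k₁p k₂m k₂p ν : ℝ)
    (p : Fin 3 → ℕ → ℝ)
    (hsum : Summable fun q : Fin 3 × ℕ => ((q.2 : ℝ) + 1) * p q.1 q.2)
    (hbal₀ : ∀ n : ℕ, 0 = -k₁p * p 0 n - (n : ℝ) * p 0 n + ((n : ℝ) + 1) * p 0 (n + 1)
      + k₁m * p 1 n)
    (hbal₁ : ∀ n : ℕ, 0 = -k₁m * p 1 n - (n : ℝ) * p 1 n + ((n : ℝ) + 1) * p 1 (n + 1)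
      + k₁p * p 0 n - k₂p * p 1 n + k₂m * p 2 n)
    (hbal₂ : ∀ n : ℕ, 0 = -k₂m * p 2 n + k₂p * p 1 n - (n : ℝ) * p 2 n
      + ((n : ℝ) + 1) * p 2 (n + 1) - ν * p 2 n
      + ν * (if n = 0 then 0 else p 2 (n - 1)))
    (G : Fin 3 → ℝ → ℝ)
    (hG : ∀ i, ∀ z : ℝ, G i z = ∑' n : ℕ, p i n * z ^ n) :
    ∀ z ∈ Set.Ioo (-1 : ℝ) 1,
      (∀ i, Summable fun n : ℕ => p i n * z ^ n) ∧
      (∀ i, DifferentiableAt ℝ (G i) z) ∧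
      k₁m * G 1 z - k₁p * G 0 z + (1 - z) * deriv (G 0) z = 0 ∧
      k₁p * G 0 z - k₁m * G 1 z - k₂p * G 1 z + k₂m * G 2 z + (1 - z) * deriv (G 1) z = 0 ∧
      k₂p * G 1 z - k₂m * G 2 z + (1 - z) * deriv (G 2) z - ν * (1 - z) * G 2 z = 0 := by
  intro z hz
  have hz : |z| < 1 := abs_lt.2 hz
  have hp i : Summable fun n : ℕ => ((n : ℝ) + 1) * p i n := hsum.prod_factor i
  have hderiv i : HasDerivAt (G i) (∑' n : ℕ, p i n * ((n : ℝ) * z ^ (n - 1))) z :=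
    funext (hG i) ▸ hasDerivAt_tsum_mul_pow (hp i) hz
  have hsumG i : HasSum (fun n : ℕ => p i n * z ^ n) (G i z) :=
    hG i z ▸ (summable_mul_pow (hp i) hz.le).hasSum
  have hsumD i : HasSum (fun n : ℕ => ((n : ℝ) + 1) * p i (n + 1) * z ^ n) (deriv (G i) z) :=
    (hderiv i).deriv ▸ hasSum_succ_mul_succ_mul_pow (hp i) hz.le
  have hsumN i : HasSum (fun n : ℕ => (n : ℝ) * p i n * z ^ n) (z * deriv (G i) z) :=
    (hderiv i).deriv ▸ hasSum_natCast_mul_mul_pow (hp i) hz.le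
  refine ⟨fun i => (hsumG i).summable, fun i => (hderiv i).differentiableAt, ?_, ?_, ?_⟩
  · have := (((((hsumG 1).mul_left k₁m).sub ((hsumG 0).mul_left k₁p)).add (hsumD 0)).sub
      (hsumN 0)).eq_zero_of_forall_eq_zero fun n => by linear_combination (-z ^ n) * hbal₀ n
    linear_combination this
  · have := (((((((hsumG 0).mul_left k₁p).sub ((hsumG 1).mul_left k₁m)).sub
      ((hsumG 1).mul_left k₂p)).add ((hsumG 2).mul_left k₂m)).add (hsumD 1)).sub
      (hsumN 1)).eq_zero_of_forall_eq_zero fun n => by linear_combination (-z ^ n) * hbal₁ n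
    linear_combination this
  · have := (((((((hsumG 1).mul_left k₂p).sub ((hsumG 2).mul_left k₂m)).add (hsumD 2)).sub
      (hsumN 2)).sub ((hsumG 2).mul_left ν)).add ((hsumG 2).shift_mul_pow.mul_left ν)
      ).eq_zero_of_forall_eq_zero fun n => by linear_combination (-z ^ n) * hbal₂ n
    linear_combination this

/-- If nonnegative steady-state probabilities p_{i,n} with
Σ_{i,n} (n+1)p_{i,n} < ∞ satisfy the balance equations of the three-state gene model,
then the generating functions G_i(z) = Σₙ p_{i,n} zⁿ are well-defined and differentiable
on (−1,1) and satisfy the steady-state generating-function system there. -/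
theorem balance_equations_to_generating_functions
    (k₁m k₁p k₂m k₂p ν : ℝ) (hk₁m : 0 < k₁m) (hk₁p : 0 < k₁p)
    (hk₂m : 0 < k₂m) (hk₂p : 0 < k₂p) (hν : 0 < ν)
    (p : Fin 3 → ℕ → ℝ)
    (hpos : ∀ i n, 0 ≤ p i n)
    (hsum : Summable fun q : Fin 3 × ℕ => ((q.2 : ℝ) + 1) * p q.1 q.2)
    (hbal₀ : ∀ n : ℕ, 0 = -k₁p * p 0 n - (n : ℝ) * p 0 n + ((n : ℝ) + 1) * p 0 (n + 1)
      + k₁m * p 1 n)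
    (hbal₁ : ∀ n : ℕ, 0 = -k₁m * p 1 n - (n : ℝ) * p 1 n + ((n : ℝ) + 1) * p 1 (n + 1)
      + k₁p * p 0 n - k₂p * p 1 n + k₂m * p 2 n)
    (hbal₂ : ∀ n : ℕ, 0 = -k₂m * p 2 n + k₂p * p 1 n - (n : ℝ) * p 2 n
      + ((n : ℝ) + 1) * p 2 (n + 1) - ν * p 2 n
      + ν * (if n = 0 then 0 else p 2 (n - 1)))
    (G : Fin 3 → ℝ → ℝ)
    (hG : ∀ i, ∀ z : ℝ, G i z = ∑' n : ℕ, p i n * z ^ n) :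
    ∀ z ∈ Set.Ioo (-1 : ℝ) 1,
      (∀ i, Summable fun n : ℕ => p i n * z ^ n) ∧
      (∀ i, DifferentiableAt ℝ (G i) z) ∧
      k₁m * G 1 z - k₁p * G 0 z + (1 - z) * deriv (G 0) z = 0 ∧
      k₁p * G 0 z - k₁m * G 1 z - k₂p * G 1 z + k₂m * G 2 z + (1 - z) * deriv (G 1) z = 0 ∧
      k₂p * G 1 z - k₂m * G 2 z + (1 - z) * deriv (G 2) z - ν * (1 - z) * G 2 z = 0 :=
  balance_equations_to_generating_functions_general k₁m k₁p k₂m k₂p ν p hsum hbal₀ hbal₁ hbal₂ G hG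
end
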